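/- Let G and H be finite simple graphs. If the Cartesian product G□H is strongly edge-balanced, or the lexicographic product G[H] is strongly edge-balanced, then at least one of the following holds: (i) |V(G)| and |V(H)| are both even; (ii) |E(G)| and |E(H)| are both even; (iii) |E(G)| and |V(G)| are both even; (iv) |E(H)| and |V(H)| are both even; (v) |V(G)|, |V(H)|, |E(G)|, |E(H)| are all odd. -/

import Mathlib

open SimpleGraph

/-- The lexicographic product (composition) `G[H]`. -/
def lexProd {α β : Type*} (G : SimpleGraph α) (H : SimpleGraph β) :
    SimpleGraph (α × β) where
  Adj x y := G.Adj x.1 y.1 ∨ (x.1 = y.1 ∧ H.Adj x.2 y.2)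
  symm := ⟨fun x y h =>
    h.elim (fun h' => Or.inl h'.symm) (fun ⟨he, h2⟩ => Or.inr ⟨he.symm, h2.symm⟩)⟩
  loopless := ⟨fun x h =>
    h.elim G.irrefl (fun ⟨_, h2⟩ => H.irrefl h2)⟩

/-- The direct (tensor, Kronecker) product `G × H`. -/
def tensorProd {α β : Type*} (G : SimpleGraph α) (H : SimpleGraph β) :
    SimpleGraph (α × β) where
  Adj x y := G.Adj x.1 y.1 ∧ H.Adj x.2 y.2
  symm := ⟨fun _ _ ⟨h1, h2⟩ => ⟨h1.symm, h2.symm⟩⟩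
  loopless := ⟨fun x h => G.irrefl h.1⟩

/-- The number of edges labeled `i` by the edge labeling `f`. -/
noncomputable def edgeCount {V : Type*} (G : SimpleGraph V) (f : G.edgeSet → ZMod 2) (i : ZMod 2) : ℕ :=
  Nat.card {e : G.edgeSet // f e = i}

/-- The number of edges incident to `v` that are labeled `i` (the `i`-degree of `v`). -/
noncomputable def labDeg {V : Type*} (G : SimpleGraph V) (f : G.edgeSet → ZMod 2) (i : ZMod 2) (v : V) : ℕ :=
  Nat.card {e : G.edgeSet // f e = i ∧ v ∈ (e : Sym2 V)}

/-- The number of vertices whose induced (partial) label is `i`: those incident to strictly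
more `i`-edges than `(1-i)`-edges. -/
noncomputable def vertexCount {V : Type*} (G : SimpleGraph V) (f : G.edgeSet → ZMod 2) (i : ZMod 2) : ℕ :=
  Nat.card {v : V // labDeg G f (1 - i) v < labDeg G f i v}

/-- An edge labeling (a surjective function onto `ZMod 2`) is edge-friendly if
`|e_f(0) - e_f(1)| ≤ 1`. -/
def EdgeFriendly {V : Type*} (G : SimpleGraph V) (f : G.edgeSet → ZMod 2) : Prop :=
  Function.Surjective f ∧ |(edgeCount G f 0 : ℤ) - (edgeCount G f 1 : ℤ)| ≤ 1

/-- A graph is strongly edge-balanced if some edge-friendly labeling `f` satisfies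
`v_f(0) = v_f(1)` and `e_f(0) = e_f(1)`. -/
def StronglyEdgeBalanced {V : Type*} (G : SimpleGraph V) : Prop :=
  ∃ f : G.edgeSet → ZMod 2, EdgeFriendly G f ∧
    vertexCount G f 0 = vertexCount G f 1 ∧ edgeCount G f 0 = edgeCount G f 1


/-! Both products have an even number of edges when strongly edge-balanced, since
`e_f(0) = e_f(1)`. Counting edges by the handshake lemma,
`|E(G□H)| = |E(G)|·|V(H)| + |E(H)|·|V(G)|` and `|E(G[H])| = |E(G)|·|V(H)|² + |E(H)|·|V(G)|`,
and the five conditions are exactly the parity patterns making such a sum even. -/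

theorem parity_cases_of_even_mul_pow_add_mul {a b m n k : ℕ} (hk : k ≠ 0)
    (h : Even (m * b ^ k + n * a)) :
    (Even a ∧ Even b) ∨ (Even m ∧ Even n) ∨ (Even m ∧ Even a) ∨ (Even n ∧ Even b) ∨
      (Odd a ∧ Odd b ∧ Odd m ∧ Odd n) := by
  simp only [Nat.even_add, Nat.even_mul, Nat.even_pow' hk] at h
  simp only [← Nat.not_even_iff_odd]
  tauto

theorem edgeCount_zero_add_edgeCount_one {V : Type*} (K : SimpleGraph V) [Finite K.edgeSet]
    (f : K.edgeSet → ZMod 2) :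
    edgeCount K f 0 + edgeCount K f 1 = Nat.card K.edgeSet := by
  have hne : ∀ x : ZMod 2, ¬x = 0 ↔ x = 1 := by decide
  rw [edgeCount, edgeCount, ← Nat.card_sum]
  exact Nat.card_congr <| (Equiv.sumCongr (Equiv.refl _)
    (Equiv.subtypeEquivRight fun e => (hne (f e)).symm)).trans (Equiv.sumCompl _)

theorem StronglyEdgeBalanced.even_card_edgeSet {V : Type*} {K : SimpleGraph V} [Finite K.edgeSet]
    (h : StronglyEdgeBalanced K) : Even (Nat.card K.edgeSet) := by
  obtain ⟨f, -, -, heq⟩ := h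
  rw [← edgeCount_zero_add_edgeCount_one, heq]
  exact Even.add_self _

namespace SimpleGraph

theorem two_mul_card_edgeSet {V : Type*} [Fintype V] (K : SimpleGraph V) [DecidableRel K.Adj] :
    2 * Nat.card K.edgeSet = ∑ v, K.degree v := by
  classical
  rw [sum_degrees_eq_twice_card_edges, edgeFinset_card, Nat.card_eq_fintype_card]

variable {α β : Type*} (G : SimpleGraph α) (H : SimpleGraph β)

instance [DecidableEq α] [DecidableRel G.Adj] [DecidableRel H.Adj] :
    DecidableRel (lexProd G H).Adj :=
  fun x y => inferInstanceAs (Decidable (G.Adj x.1 y.1 ∨ (x.1 = y.1 ∧ H.Adj x.2 y.2)))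

section Finite

variable [Fintype α] [Fintype β]

theorem neighborFinset_lexProd [DecidableEq α] [DecidableEq β] [DecidableRel G.Adj]
    [DecidableRel H.Adj] (x : α × β) :
    (lexProd G H).neighborFinset x =
      G.neighborFinset x.1 ×ˢ Finset.univ ∪ {x.1} ×ˢ H.neighborFinset x.2 := by
  ext ⟨u, v⟩
  rw [mem_neighborFinset]
  simp [lexProd, eq_comm, and_comm]

theorem degree_lexProd [DecidableEq α] [DecidableEq β] [DecidableRel G.Adj] [DecidableRel H.Adj]
    (u : α) (v : β) :
    (lexProd G H).degree (u, v) = G.degree u * Fintype.card β + H.degree v := by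
  rw [degree, neighborFinset_lexProd, Finset.card_union_of_disjoint, Finset.card_product,
    Finset.card_product, Finset.card_univ, Finset.card_singleton, one_mul, degree, degree]
  exact Finset.disjoint_product.mpr <| Or.inl <| neighborFinset_disjoint_singleton _ _

theorem card_edgeSet_boxProd :
    Nat.card (G □ H).edgeSet = Nat.card G.edgeSet * Nat.card β + Nat.card H.edgeSet * Nat.card α := by
  classical
  suffices 2 * Nat.card (G □ H).edgeSet =
      2 * (Nat.card G.edgeSet * Nat.card β + Nat.card H.edgeSet * Nat.card α) by omega
  calc 2 * Nat.card (G □ H).edgeSet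
      = ∑ u, ∑ v, (G.degree u + H.degree v) := by
        rw [two_mul_card_edgeSet, Fintype.sum_prod_type]
        simp only [degree_boxProd]
    _ = Nat.card β * ∑ u, G.degree u + Nat.card α * ∑ v, H.degree v := by
        simp [Finset.sum_add_distrib, Finset.mul_sum, Nat.card_eq_fintype_card]
    _ = _ := by
        rw [← two_mul_card_edgeSet G, ← two_mul_card_edgeSet H]
        ring

theorem card_edgeSet_lexProd :
    Nat.card (lexProd G H).edgeSet =
      Nat.card G.edgeSet * Nat.card β ^ 2 + Nat.card H.edgeSet * Nat.card α := by
  classical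
  suffices 2 * Nat.card (lexProd G H).edgeSet =
      2 * (Nat.card G.edgeSet * Nat.card β ^ 2 + Nat.card H.edgeSet * Nat.card α) by omega
  calc 2 * Nat.card (lexProd G H).edgeSet
      = ∑ u, ∑ v, (G.degree u * Nat.card β + H.degree v) := by
        rw [two_mul_card_edgeSet, Fintype.sum_prod_type]
        simp only [degree_lexProd, Nat.card_eq_fintype_card]
    _ = Nat.card β ^ 2 * ∑ u, G.degree u + Nat.card α * ∑ v, H.degree v := by
        simp only [Nat.card_eq_fintype_card, Finset.sum_add_distrib, Finset.sum_const,
          Finset.card_univ, smul_eq_mul, Finset.mul_sum, Nat.add_right_cancel_iff]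
        exact Finset.sum_congr rfl fun _ _ => by ring
    _ = _ := by
        rw [← two_mul_card_edgeSet G, ← two_mul_card_edgeSet H]
        ring

end Finite

end SimpleGraph

theorem stronglyEdgeBalanced_imp_parity_conditions {α β : Type*} [Fintype α] [Fintype β]
    (G : SimpleGraph α) (H : SimpleGraph β)
    (hseb : StronglyEdgeBalanced (G.boxProd H) ∨ StronglyEdgeBalanced (lexProd G H)) :
    (Even (Nat.card α) ∧ Even (Nat.card β)) ∨
      (Even (Nat.card G.edgeSet) ∧ Even (Nat.card H.edgeSet)) ∨
      (Even (Nat.card G.edgeSet) ∧ Even (Nat.card α)) ∨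
      (Even (Nat.card H.edgeSet) ∧ Even (Nat.card β)) ∨
      (Odd (Nat.card α) ∧ Odd (Nat.card β) ∧
        Odd (Nat.card G.edgeSet) ∧ Odd (Nat.card H.edgeSet)) := by
  rcases hseb with hbox | hlex
  · have h := hbox.even_card_edgeSet
    rw [card_edgeSet_boxProd, ← pow_one (Nat.card β)] at h
    exact parity_cases_of_even_mul_pow_add_mul one_ne_zero h
  · have h := hlex.even_card_edgeSet
    rw [card_edgeSet_lexProd] at h
    exact parity_cases_of_even_mul_pow_add_mul two_ne_zero h
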